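/- Let n ≥ 1, let m = n + 2, and let Δ be the standard (n+1)-dimensional simplex, the convex hull of the standard basis e₁, …, e_m of ℝ^m; for a nonempty set I ⊆ {1, …, m} let Δ_I denote the convex hull of {e_i : i ∈ I}, i.e., the face of Δ consisting of points whose coordinates vanish outside I. Let X be a topological space and let (P_I), indexed by the nonempty subsets I ⊆ {1, …, m}, be a family of subsets of X such that P_{{1,…,m}} = X, each P_I is nonempty and contractible as a topological subspace, and P_{I∖{i}} ⊆ P_I whenever i ∈ I and I∖{i} ≠ ∅. Then there exists a continuous map f : Δ → X such that f(Δ_I) ⊆ P_I for every nonempty I ⊆ {1, …, m}. -/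

import Mathlib

/-!
The map is built skeleton by skeleton. Suppose `g` is continuous on every face with at most `k`
vertices and maps `Δ_J` into `P J` there. A face `Δ_I` with `k + 1` vertices is the cone over
its boundary with apex at the barycenter, and by monotonicity `g` maps `∂Δ_I` into the
contractible set `P I`. Running a contraction `H` of `P I` along the cone coordinate `t`,
`x ↦ H (t x, g (r x))` with `r` the radial projection to `∂Δ_I` extends `g` over `Δ_I` into
`P I`; it is continuous at the apex because `∂Δ_I` is compact. Two faces with `k + 1` vertices
meet inside their boundaries, so these extensions glue.
-/

open Set Finset Filter Topology

section ConeMap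

variable {T B X : Type*} [TopologicalSpace T] [TopologicalSpace B] [TopologicalSpace X]
  [CompactSpace B]

theorem tendsto_nhds_prod_top_of_forall_eq {A : Type*} [TopologicalSpace A] {Φ : A × B → X}
    (hΦ : Continuous Φ) {a : A} {c : X} (hc : ∀ b, Φ (a, b) = c) :
    Tendsto Φ (𝓝 a ×ˢ ⊤) (𝓝 c) := by
  have := hΦ.tendsto_nhdsSet (s := {a} ×ˢ Set.univ) (t := {c}) (by
    rintro ⟨a', b⟩ ⟨ha : a' = a, -⟩
    exact ha ▸ hc b)
  rwa [isCompact_singleton.nhdsSet_prod_eq CompactSpace.isCompact_univ, nhdsSet_singleton,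
    nhdsSet_univ, nhdsSet_singleton] at this

theorem continuous_coneMap (Φ : C(unitInterval × B, X)) {c : X} (hΦ : ∀ b, Φ (1, b) = c)
    {μ : T → unitInterval} (hμ : Continuous μ) {r : T → B}
    (hr : ∀ x, μ x ≠ 1 → ContinuousAt r x) :
    Continuous fun x => Φ (μ x, r x) := by
  refine continuous_iff_continuousAt.2 fun x => ?_
  by_cases hx : μ x = 1
  · have := (tendsto_nhds_prod_top_of_forall_eq Φ.continuous hΦ).comp
      ((hx ▸ hμ.tendsto x).prodMk (tendsto_top (f := r)))
    rwa [ContinuousAt, hx, hΦ]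
  · exact Φ.continuous.continuousAt.comp (hμ.continuousAt.prodMk (hr x hx))

end ConeMap

namespace stdSimplex

section Faces

variable {ι : Type*} [Fintype ι]

def face (I : Finset ι) : Set (ι → ℝ) :=
  {x | x ∈ stdSimplex ℝ ι ∧ ∀ i ∉ I, x i = 0}

def faceBoundary [DecidableEq ι] (I : Finset ι) : Set (ι → ℝ) :=
  ⋃ i ∈ I, face (I.erase i)

noncomputable def support (x : ι → ℝ) : Finset ι := {i | x i ≠ 0}

theorem support_subset_iff {x : ι → ℝ} {I : Finset ι} :
    support x ⊆ I ↔ ∀ i ∉ I, x i = 0 := by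
  simp [support, Finset.subset_iff, not_imp_comm]

theorem mem_face_iff {x : ι → ℝ} {I : Finset ι} :
    x ∈ face I ↔ x ∈ stdSimplex ℝ ι ∧ support x ⊆ I := by
  rw [support_subset_iff]
  rfl

theorem isClosed_face (I : Finset ι) : IsClosed (face I) := by
  refine (isClosed_stdSimplex ℝ ι).inter ?_
  change IsClosed {x : ι → ℝ | ∀ i, i ∉ I → x i = 0}
  simp only [ofPred_forall]
  exact isClosed_iInter fun i => isClosed_iInter fun _ =>
    isClosed_eq (continuous_apply i) continuous_const

theorem face_mono {I J : Finset ι} (h : I ⊆ J) : face I ⊆ face J :=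
  fun _ hx => ⟨hx.1, fun i hi => hx.2 i fun hiI => hi (h hiI)⟩

@[simp]
theorem face_empty : face (∅ : Finset ι) = ∅ :=
  eq_empty_of_forall_notMem fun x hx => by
    simpa [Finset.sum_eq_zero fun i _ => hx.2 i (Finset.notMem_empty i)] using hx.1.2

theorem nonempty_of_mem_face {x : ι → ℝ} {I : Finset ι} (hx : x ∈ face I) : I.Nonempty :=
  Finset.nonempty_iff_ne_empty.2 fun h => by simp [h] at hx

theorem face_univ : face (Finset.univ : Finset ι) = stdSimplex ℝ ι := by
  simp [face]

variable [DecidableEq ι]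

theorem mem_faceBoundary {x : ι → ℝ} {I : Finset ι} :
    x ∈ faceBoundary I ↔ x ∈ face I ∧ ∃ i ∈ I, x i = 0 := by
  simp only [faceBoundary, mem_iUnion₂]
  constructor
  · rintro ⟨i, hi, hx⟩
    exact ⟨face_mono (I.erase_subset i) hx, i, hi, hx.2 i (I.notMem_erase i)⟩
  · rintro ⟨hx, i, hi, hxi⟩
    refine ⟨i, hi, hx.1, fun j hj => ?_⟩
    by_cases hji : j = i
    · rwa [hji]
    · exact hx.2 j fun hjI => hj (mem_erase.2 ⟨hji, hjI⟩)

theorem mem_faceBoundary_of_support_ne {x : ι → ℝ} {I : Finset ι} (hx : x ∈ face I)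
    (h : support x ≠ I) : x ∈ faceBoundary I := by
  obtain ⟨i, hiI, hix⟩ :=
    Finset.exists_of_ssubset ((mem_face_iff.1 hx).2.ssubset_of_ne h)
  exact mem_faceBoundary.2 ⟨hx, i, hiI, by simpa [support] using hix⟩

theorem faceBoundary_subset_face (I : Finset ι) : faceBoundary I ⊆ face I :=
  fun _ hx => (mem_faceBoundary.1 hx).1

theorem isCompact_faceBoundary (I : Finset ι) : IsCompact (faceBoundary I) :=
  (isCompact_stdSimplex ℝ ι).of_isClosed_subset
    (isClosed_biUnion_finset fun _ _ => isClosed_face _)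
    ((faceBoundary_subset_face I).trans fun _ hx => hx.1)

@[simp]
theorem faceBoundary_singleton (i : ι) : faceBoundary {i} = ∅ := by
  simp [faceBoundary]

theorem continuousOn_faceBoundary {X : Type*} [TopologicalSpace X] {g : (ι → ℝ) → X}
    {I : Finset ι} (h : ∀ i ∈ I, ContinuousOn g (face (I.erase i))) :
    ContinuousOn g (faceBoundary I) := by
  rw [faceBoundary, ← Finset.set_biUnion_coe, biUnion_eq_iUnion]
  exact (locallyFinite_of_finite _).continuousOn_iUnion (fun _ => isClosed_face _)
    fun i => h i i.2

end Faces

section Cone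

variable {ι : Type*} {I : Finset ι} (hI : I.Nonempty)

/- On `Δ_I`, `coneHeight I hI` vanishes exactly on `∂Δ_I` and equals `1` exactly at the
barycenter `b`. For `h = coneHeight I hI x < 1`, `radialProj I hI i₀ x` is the point of `∂Δ_I`
with `x = h • b + (1 - h) • radialProj I hI i₀ x`; at `b` itself any vertex `i₀` will do. -/
noncomputable def coneHeight (I : Finset ι) (hI : I.Nonempty) (x : ι → ℝ) : ℝ :=
  I.card * I.inf' hI x

theorem continuous_coneHeight : Continuous (coneHeight I hI) :=
  continuous_const.mul (Continuous.finset_inf'_apply hI fun i _ => continuous_apply i)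

variable [DecidableEq ι]

noncomputable def radialProj (I : Finset ι) (hI : I.Nonempty) (i₀ : ι) (x : ι → ℝ) :
    ι → ℝ :=
  if coneHeight I hI x < 1 then
    fun j => (x j - if j ∈ I then I.inf' hI x else 0) / (1 - coneHeight I hI x)
  else Pi.single i₀ 1

theorem radialProj_eq_self (i₀ : ι) {x : ι → ℝ} (hx : I.inf' hI x = 0) :
    radialProj I hI i₀ x = x := by
  simp [radialProj, coneHeight, hx]

theorem continuousAt_radialProj (i₀ : ι) {x : ι → ℝ} (hx : coneHeight I hI x < 1) :
    ContinuousAt (radialProj I hI i₀) x := by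
  have hinf : Continuous fun y : ι → ℝ => I.inf' hI y :=
    Continuous.finset_inf'_apply hI fun i _ => continuous_apply i
  have hformula : ContinuousAt (fun y j =>
      (y j - if j ∈ I then I.inf' hI y else 0) / (1 - coneHeight I hI y)) x :=
    continuousAt_pi.2 fun j =>
      ((continuous_apply j).sub (continuous_if_const _ (fun _ => hinf) fun _ => continuous_const)
        ).continuousAt.div (continuous_const.sub (continuous_coneHeight hI)).continuousAt
        (sub_pos.2 hx).ne'
  refine hformula.congr ?_
  filter_upwards [(isOpen_lt (continuous_coneHeight hI) continuous_const).mem_nhds hx] with y hy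
  exact (if_pos hy).symm

end Cone

section Extension

variable {ι : Type*} [Fintype ι] [DecidableEq ι] {I : Finset ι} {X : Type*}
  [TopologicalSpace X]

theorem inf'_eq_zero_of_mem_faceBoundary (hI : I.Nonempty) {x : ι → ℝ}
    (hx : x ∈ faceBoundary I) :
    I.inf' hI x = 0 := by
  obtain ⟨hxI, i, hi, hxi⟩ := mem_faceBoundary.1 hx
  exact le_antisymm (hxi ▸ Finset.inf'_le x hi) (Finset.le_inf' hI x fun j _ => hxI.1.1 j)

theorem radialProj_mem_faceBoundary (hI : I.Nonempty) {i₀ i₁ : ι} (hi₀ : i₀ ∈ I)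
    (hi₁ : i₁ ∈ I) (hne : i₀ ≠ i₁) {x : ι → ℝ} (hx : x ∈ face I) :
    radialProj I hI i₀ x ∈ faceBoundary I := by
  unfold radialProj
  split_ifs with hlt
  · have hd : 0 < 1 - coneHeight I hI x := sub_pos.2 hlt
    obtain ⟨j, hj, hjm⟩ := Finset.exists_mem_eq_inf' hI x
    refine mem_faceBoundary.2
      ⟨⟨⟨fun l => div_nonneg ?_ hd.le, ?_⟩, fun l hl => ?_⟩, j, hj, ?_⟩
    · split_ifs with hl
      · exact sub_nonneg.2 (Finset.inf'_le x hl)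
      · simpa using hx.1.1 l
    · rw [← Finset.sum_div, Finset.sum_sub_distrib, hx.1.2, Finset.sum_ite_mem,
        Finset.univ_inter, Finset.sum_const, nsmul_eq_mul]
      exact div_self hd.ne'
    · simp [hl, hx.2 l hl]
    · simp [hj, ← hjm]
  · refine mem_faceBoundary.2 ⟨⟨single_mem_stdSimplex ℝ i₀, fun l hl => ?_⟩, i₁, hi₁, ?_⟩
    · exact Pi.single_eq_of_ne (by rintro rfl; exact hl hi₀) 1
    · exact Pi.single_eq_of_ne hne.symm 1

theorem exists_extension_of_one_lt_card (hI : 1 < I.card) {S : Set X} [ContractibleSpace S]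
    {g : (ι → ℝ) → X} (hg : ContinuousOn g (faceBoundary I))
    (hgS : MapsTo g (faceBoundary I) S) :
    ∃ A : (ι → ℝ) → X, ContinuousOn A (face I) ∧ MapsTo A (face I) S ∧
      EqOn A g (faceBoundary I) := by
  obtain ⟨i₀, hi₀, i₁, hi₁, hne⟩ := Finset.one_lt_card.1 hI
  have hIne : I.Nonempty := ⟨i₀, hi₀⟩
  obtain ⟨c, ⟨H⟩⟩ := id_nullhomotopic S
  have : CompactSpace (faceBoundary I) :=
    isCompact_iff_compactSpace.1 (isCompact_faceBoundary I)
  let Φ : C(unitInterval × faceBoundary I, X) :=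
    ⟨fun p => H (p.1, hgS.restrict g _ _ p.2), by
      have := hg.mapsToRestrict hgS
      fun_prop⟩
  let μ : face I → unitInterval := fun x => projIcc 0 1 zero_le_one (coneHeight I hIne x)
  let r : face I → faceBoundary I :=
    MapsTo.restrict _ _ _ fun x hx => radialProj_mem_faceBoundary hIne hi₀ hi₁ hne hx
  have hA : Continuous fun x => Φ (μ x, r x) := by
    refine continuous_coneMap Φ (fun b => congrArg Subtype.val (H.apply_one _))
      (continuous_projIcc.comp ((continuous_coneHeight hIne).comp continuous_subtype_val))
      fun x hx => IsInducing.subtypeVal.continuousAt_iff.2 ?_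
    have hlt : coneHeight I hIne x < 1 :=
      lt_of_not_ge fun h => hx (projIcc_of_right_le zero_le_one h)
    exact (continuousAt_radialProj hIne i₀ hlt).comp continuous_subtype_val.continuousAt
  refine ⟨Function.extend Subtype.val (fun x => Φ (μ x, r x)) g, ?_, ?_, ?_⟩
  · rw [continuousOn_iff_continuous_domRestrict]
    convert hA using 1
    ext x
    exact Subtype.val_injective.extend_apply _ _ x
  · intro x hx
    rw [show x = ((⟨x, hx⟩ : face I) : ι → ℝ) from rfl, Subtype.val_injective.extend_apply]
    exact (H _).2
  · intro x hx
    have hxI : x ∈ face I := faceBoundary_subset_face I hx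
    have hinf := inf'_eq_zero_of_mem_faceBoundary hIne hx
    rw [show x = ((⟨x, hxI⟩ : face I) : ι → ℝ) from rfl, Subtype.val_injective.extend_apply]
    have hμ0 : μ ⟨x, hxI⟩ = 0 := by
      simp [μ, coneHeight, hinf]
    have hr : r ⟨x, hxI⟩ = ⟨x, hx⟩ := Subtype.ext (radialProj_eq_self hIne i₀ hinf)
    simp [Φ, hμ0, hr]

theorem exists_extension (hI : I.Nonempty) {S : Set X} [ContractibleSpace S]
    {g : (ι → ℝ) → X} (hg : ContinuousOn g (faceBoundary I))
    (hgS : MapsTo g (faceBoundary I) S) :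
    ∃ A : (ι → ℝ) → X, ContinuousOn A (face I) ∧ MapsTo A (face I) S ∧
      EqOn A g (faceBoundary I) := by
  rcases (Finset.one_le_card.2 hI).eq_or_lt with h | h
  · obtain ⟨i, rfl⟩ := Finset.card_eq_one.1 h.symm
    obtain ⟨c, -⟩ := id_nullhomotopic S
    exact ⟨fun _ => c, continuousOn_const, fun _ _ => c.2, by simp⟩
  · exact exists_extension_of_one_lt_card h hg hgS

def MapsFacesInto (P : Finset ι → Set X) (k : ℕ) (g : (ι → ℝ) → X) : Prop :=
  ∀ I : Finset ι, I.card ≤ k → ContinuousOn g (face I) ∧ MapsTo g (face I) (P I)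

variable {P : Finset ι → Set X}
  (hPcontr : ∀ I : Finset ι, I.Nonempty → ContractibleSpace (P I))
  (hPmono : ∀ I : Finset ι, ∀ i ∈ I, (I.erase i).Nonempty → P (I.erase i) ⊆ P I)
include hPcontr hPmono

theorem MapsFacesInto.exists_extension {k : ℕ} {g : (ι → ℝ) → X} (hg : MapsFacesInto P k g)
    (hI : I.card = k + 1) :
    ∃ A : (ι → ℝ) → X, ContinuousOn A (face I) ∧ MapsTo A (face I) (P I) ∧
      EqOn A g (faceBoundary I) := by
  have hIne : I.Nonempty := Finset.card_pos.1 (by omega)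
  have hfacet : ∀ i ∈ I, (I.erase i).card ≤ k := fun i hi => by
    rw [Finset.card_erase_of_mem hi]
    omega
  have := hPcontr I hIne
  refine stdSimplex.exists_extension hIne
    (continuousOn_faceBoundary fun i hi => (hg _ (hfacet i hi)).1) ?_
  simp only [faceBoundary, MapsTo, mem_iUnion₂]
  rintro x ⟨i, hi, hx⟩
  exact hPmono I i hi (nonempty_of_mem_face hx) ((hg _ (hfacet i hi)).2 hx)

theorem MapsFacesInto.exists_succ {k : ℕ} {g : (ι → ℝ) → X} (hg : MapsFacesInto P k g) :
    ∃ G, MapsFacesInto P (k + 1) G := by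
  have hext : ∀ I : Finset ι, ∃ A : (ι → ℝ) → X, I.card = k + 1 →
      ContinuousOn A (face I) ∧ MapsTo A (face I) (P I) ∧ EqOn A g (faceBoundary I) :=
    fun I => if hI : I.card = k + 1 then
      (hg.exists_extension hPcontr hPmono hI).imp fun _ hA _ => hA
    else ⟨g, fun h => absurd h hI⟩
  choose A hA using hext
  let G : (ι → ℝ) → X := fun x => if (support x).card ≤ k then g x else A (support x) x
  have hG_low : ∀ I : Finset ι, I.card ≤ k → EqOn G g (face I) := fun I hI x hx =>
    if_pos ((Finset.card_le_card (mem_face_iff.1 hx).2).trans hI)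
  have hG_top : ∀ I : Finset ι, I.card = k + 1 → EqOn G (A I) (face I) := by
    intro I hI x hx
    by_cases hs : (support x).card ≤ k
    · refine (if_pos hs).trans ((hA I hI).2.2 (mem_faceBoundary_of_support_ne hx ?_)).symm
      rintro rfl
      omega
    · have hsI : support x = I :=
        Finset.eq_of_subset_of_card_le (mem_face_iff.1 hx).2 (by omega)
      simp only [G, if_neg hs, hsI]
  refine ⟨G, fun I hI => ?_⟩
  rcases Nat.le_succ_iff.1 hI with hI | hI
  · obtain ⟨hcont, hmaps⟩ := hg I hI
    exact ⟨hcont.congr (hG_low I hI), hmaps.congr (hG_low I hI).symm⟩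
  · obtain ⟨hcont, hmaps, -⟩ := hA I hI
    exact ⟨hcont.congr (hG_top I hI), hmaps.congr (hG_top I hI).symm⟩

theorem exists_mapsFacesInto [Nonempty X] (k : ℕ) : ∃ g, MapsFacesInto P k g := by
  induction k with
  | zero =>
    refine ⟨fun _ => Classical.arbitrary X, fun I hI => ?_⟩
    simp [Finset.card_eq_zero.1 (Nat.le_zero.1 hI), mapsTo_empty]
  | succ k ih =>
    obtain ⟨g, hg⟩ := ih
    exact hg.exists_succ hPcontr hPmono

end Extension

end stdSimplex

theorem exists_map_of_faces_into_contractible_family_general (n : ℕ)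
    {X : Type} [TopologicalSpace X]
    (P : Finset (Fin (n + 2)) → Set X)
    (hPcontr : ∀ I : Finset (Fin (n + 2)), I.Nonempty → ContractibleSpace (P I))
    (hPmono : ∀ I : Finset (Fin (n + 2)), ∀ i ∈ I, (I.erase i).Nonempty →
      P (I.erase i) ⊆ P I) :
    ∃ f : stdSimplex ℝ (Fin (n + 2)) → X, Continuous f ∧
      ∀ I : Finset (Fin (n + 2)), I.Nonempty →
        f '' {x : stdSimplex ℝ (Fin (n + 2)) |
          ∀ i ∉ I, (x : Fin (n + 2) → ℝ) i = 0} ⊆ P I := by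
  have := hPcontr Finset.univ Finset.univ_nonempty
  obtain ⟨c, -⟩ := id_nullhomotopic (P Finset.univ)
  have : Nonempty X := ⟨c⟩
  obtain ⟨g, hg⟩ := stdSimplex.exists_mapsFacesInto hPcontr hPmono (n + 2)
  have hall (I : Finset (Fin (n + 2))) := hg I (by simpa using Finset.card_le_univ I)
  refine ⟨fun x => g x, ?_, fun I _ => ?_⟩
  · have hcont := (hall Finset.univ).1
    rw [stdSimplex.face_univ] at hcont
    exact hcont.comp_continuous continuous_subtype_val Subtype.prop
  · rintro _ ⟨x, hx, rfl⟩
    exact (hall I).2 ⟨x.2, hx⟩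

/-- Construction of a map from the standard `(n+1)`-simplex into a space `X`,
sending the face `Δ_I` spanned by the vertices in `I` into a prescribed set `P I`,
given that the sets `P I` are nonempty, contractible, monotone along faces, and
`P` of the full index set is all of `X`. -/
theorem exists_map_of_faces_into_contractible_family (n : ℕ) (hn : 1 ≤ n)
    {X : Type} [TopologicalSpace X]
    (P : Finset (Fin (n + 2)) → Set X)
    (hPuniv : P Finset.univ = Set.univ)
    (hPne : ∀ I : Finset (Fin (n + 2)), I.Nonempty → (P I).Nonempty)
    (hPcontr : ∀ I : Finset (Fin (n + 2)), I.Nonempty → ContractibleSpace (P I))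
    (hPmono : ∀ I : Finset (Fin (n + 2)), ∀ i ∈ I, (I.erase i).Nonempty →
      P (I.erase i) ⊆ P I) :
    ∃ f : stdSimplex ℝ (Fin (n + 2)) → X, Continuous f ∧
      ∀ I : Finset (Fin (n + 2)), I.Nonempty →
        f '' {x : stdSimplex ℝ (Fin (n + 2)) |
          ∀ i ∉ I, (x : Fin (n + 2) → ℝ) i = 0} ⊆ P I :=
  exists_map_of_faces_into_contractible_family_general n P hPcontr hPmono
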